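/- arXiv:1309.5028 — 4 statements merged into one kernel-verified Lean document; each statement's English description precedes it below -/
import Mathlib

section
/- Let q ∈ L¹(ℝ^d) be nonnegative a.e. with supp q ⊂ B_ρ(0) for some ρ > 0. Then for every R > 0 and every measurable function u: ∫_{B_R}∫_{B_R} (u(x)−u(y))² (q∗q)(x−y) dy dx ≤ 4‖q‖_{L¹} ∫_{B_{R+ρ}}∫_{B_{R+ρ}} (u(x)−u(y))² q(x−y) dy dx. -/
/-!
Write `(q∗q)(x - y) = ∫ q(x - z) q(z - y) dz` as an integral over two-step paths `x → z → y`,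
and split `(u x - u y)² ≤ 2 (u x - u z)² + 2 (u z - u y)²` along the path. In each of the two
resulting terms one step carries the weight `(u · - u ·)² q`, while the other step integrates
to at most `‖q‖₁` (Tonelli and translation invariance). Since `q` vanishes off `B_ρ`, the
endpoints of the weighted step stay in `B_{R+ρ}` once one of them lies in `B_R`.
-/

open MeasureTheory Metric Function
open scoped ENNReal

theorem ofReal_integral_le_lintegral_ofReal {α : Type*} [MeasurableSpace α] {μ : Measure α}
    {f : α → ℝ} (hf : 0 ≤ᵐ[μ] f) :
    ENNReal.ofReal (∫ a, f a ∂μ) ≤ ∫⁻ a, ENNReal.ofReal (f a) ∂μ := by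
  by_cases hfi : Integrable f μ
  · exact (ofReal_integral_eq_lintegral_ofReal hfi hf).le
  · simp [integral_undef hfi]

theorem ofReal_sq_sub_le (a b c : ℝ) :
    ENNReal.ofReal ((a - b) ^ 2) ≤
      2 * (ENNReal.ofReal ((a - c) ^ 2) + ENNReal.ofReal ((c - b) ^ 2)) := by
  rw [← ENNReal.ofReal_add (sq_nonneg _) (sq_nonneg _), ← ENNReal.ofReal_ofNat 2,
    ← ENNReal.ofReal_mul zero_le_two]
  refine ENNReal.ofReal_le_ofReal ?_
  simpa using add_sq_le (a := a - c) (b := c - b)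

theorem lintegral_lintegral_mul_le {α β : Type*} [MeasurableSpace α] [MeasurableSpace β]
    {μ : Measure α} {ν : Measure β} [SFinite μ] [SFinite ν] {φ : α → ℝ≥0∞} {ψ : β × α → ℝ≥0∞}
    (hφ : Measurable φ) (hψ : Measurable ψ) {N : ℝ≥0∞} (hN : ∀ a, ∫⁻ b, ψ (b, a) ∂ν ≤ N) :
    ∫⁻ b, ∫⁻ a, φ a * ψ (b, a) ∂μ ∂ν ≤ (∫⁻ a, φ a ∂μ) * N := by
  rw [lintegral_lintegral_swap (by fun_prop)]
  calc ∫⁻ a, ∫⁻ b, φ a * ψ (b, a) ∂ν ∂μ = ∫⁻ a, φ a * ∫⁻ b, ψ (b, a) ∂ν ∂μ := by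
        refine lintegral_congr fun a ↦ lintegral_const_mul _ ?_
        fun_prop
    _ ≤ ∫⁻ a, φ a * N ∂μ := by gcongr; exact hN _
    _ = (∫⁻ a, φ a ∂μ) * N := lintegral_mul_const _ hφ

section Ball

variable {E : Type*} [NormedAddCommGroup E] {R ρ : ℝ} {x y z : E}

theorem mem_ball_add_of_sub_left (hx : x ∈ ball 0 R) (hxz : x - z ∈ ball 0 ρ) :
    z ∈ ball 0 (R + ρ) := by
  rw [mem_ball_zero_iff] at *
  linarith [norm_le_insert' z x, norm_sub_rev x z]

theorem mem_ball_add_of_sub_right (hy : y ∈ ball 0 R) (hzy : z - y ∈ ball 0 ρ) :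
    z ∈ ball 0 (R + ρ) := by
  rw [mem_ball_zero_iff] at *
  linarith [norm_le_insert' z y]

variable [MeasurableSpace E] {μ : Measure E} {g : E → ℝ≥0∞}

theorem lintegral_mul_sub_left_eq_setLIntegral (hsupp : support g ⊆ ball 0 ρ)
    (hx : x ∈ ball 0 R) (φ : E → ℝ≥0∞) :
    ∫⁻ z, φ z * g (x - z) ∂μ = ∫⁻ z in ball 0 (R + ρ), φ z * g (x - z) ∂μ :=
  (setLIntegral_eq_of_support_subset fun _ hz ↦ mem_ball_add_of_sub_left hx
    (hsupp (support_mul_subset_right φ (fun z ↦ g (x - z)) hz))).symm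

theorem lintegral_mul_sub_right_eq_setLIntegral (hsupp : support g ⊆ ball 0 ρ)
    (hy : y ∈ ball 0 R) (φ : E → ℝ≥0∞) :
    ∫⁻ z, φ z * g (z - y) ∂μ = ∫⁻ z in ball 0 (R + ρ), φ z * g (z - y) ∂μ :=
  (setLIntegral_eq_of_support_subset fun _ hz ↦ mem_ball_add_of_sub_right hy
    (hsupp (support_mul_subset_right φ (fun z ↦ g (z - y)) hz))).symm

end Ball

section Kernel

variable {E : Type*} [NormedAddCommGroup E] [MeasurableSpace E] [OpensMeasurableSpace E]
  [MeasurableAdd₂ E] [MeasurableNeg E] {μ : Measure E} [SFinite μ] [μ.IsAddLeftInvariant]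
  {g : E → ℝ≥0∞} {F : E × E → ℝ≥0∞} {ρ R : ℝ}

theorem lintegral_ball_ball_firstStep_le [μ.IsNegInvariant] (hρ : 0 ≤ ρ) (hg : Measurable g)
    (hsupp : support g ⊆ ball 0 ρ) (hF : Measurable F) :
    ∫⁻ x in ball 0 R, ∫⁻ y in ball 0 R, ∫⁻ z, F (x, z) * g (x - z) * g (z - y) ∂μ ∂μ ∂μ ≤
      (∫⁻ a, g a ∂μ) * ∫⁻ x in ball 0 (R + ρ), ∫⁻ z in ball 0 (R + ρ),
        F (x, z) * g (x - z) ∂μ ∂μ := by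
  calc ∫⁻ x in ball 0 R, ∫⁻ y in ball 0 R, ∫⁻ z, F (x, z) * g (x - z) * g (z - y) ∂μ ∂μ ∂μ
      ≤ ∫⁻ x in ball 0 R, (∫⁻ z in ball 0 (R + ρ), F (x, z) * g (x - z) ∂μ) *
          ∫⁻ a, g a ∂μ ∂μ := by
        refine setLIntegral_mono' measurableSet_ball fun x hx ↦ ?_
        rw [← lintegral_mul_sub_left_eq_setLIntegral hsupp hx]
        exact lintegral_lintegral_mul_le (ψ := fun p ↦ g (p.2 - p.1)) (by fun_prop) (by fun_prop)
          fun z ↦ (setLIntegral_le_lintegral _ _).trans_eq (lintegral_sub_left_eq_self g z)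
    _ ≤ ∫⁻ x in ball 0 (R + ρ), (∫⁻ z in ball 0 (R + ρ), F (x, z) * g (x - z) ∂μ) *
          ∫⁻ a, g a ∂μ ∂μ := lintegral_mono_set (ball_subset_ball (by linarith))
    _ = _ := by rw [lintegral_mul_const _ (by fun_prop), mul_comm]

theorem lintegral_ball_ball_secondStep_le (hρ : 0 ≤ ρ) (hg : Measurable g)
    (hsupp : support g ⊆ ball 0 ρ) (hF : Measurable F) :
    ∫⁻ x in ball 0 R, ∫⁻ y in ball 0 R, ∫⁻ z, F (z, y) * g (x - z) * g (z - y) ∂μ ∂μ ∂μ ≤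
      (∫⁻ a, g a ∂μ) * ∫⁻ z in ball 0 (R + ρ), ∫⁻ y in ball 0 (R + ρ),
        F (z, y) * g (z - y) ∂μ ∂μ := by
  calc ∫⁻ x in ball 0 R, ∫⁻ y in ball 0 R, ∫⁻ z, F (z, y) * g (x - z) * g (z - y) ∂μ ∂μ ∂μ
      = ∫⁻ y in ball 0 R, ∫⁻ x in ball 0 R, ∫⁻ z, F (z, y) * g (z - y) * g (x - z) ∂μ ∂μ ∂μ := by
        rw [lintegral_lintegral_swap (by fun_prop)]
        simp only [mul_right_comm]
    _ ≤ ∫⁻ y in ball 0 R, (∫⁻ z in ball 0 (R + ρ), F (z, y) * g (z - y) ∂μ) *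
          ∫⁻ a, g a ∂μ ∂μ := by
        refine setLIntegral_mono' measurableSet_ball fun y hy ↦ ?_
        rw [← lintegral_mul_sub_right_eq_setLIntegral hsupp hy]
        exact lintegral_lintegral_mul_le (ψ := fun p ↦ g (p.1 - p.2)) (by fun_prop) (by fun_prop)
          fun z ↦ (setLIntegral_le_lintegral _ _).trans_eq (lintegral_sub_right_eq_self g z)
    _ ≤ ∫⁻ y in ball 0 (R + ρ), (∫⁻ z in ball 0 (R + ρ), F (z, y) * g (z - y) ∂μ) *
          ∫⁻ a, g a ∂μ ∂μ := lintegral_mono_set (ball_subset_ball (by linarith))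
    _ = _ := by
        rw [lintegral_mul_const _ (by fun_prop), mul_comm, lintegral_lintegral_swap (by fun_prop)]

theorem lintegral_ball_ball_mul_twoStep_le [μ.IsNegInvariant] (hρ : 0 ≤ ρ) (hg : Measurable g)
    (hsupp : support g ⊆ ball 0 ρ) (hF : Measurable F) {C : ℝ≥0∞}
    (hFC : ∀ x y z, F (x, y) ≤ C * (F (x, z) + F (z, y))) :
    ∫⁻ x in ball 0 R, ∫⁻ y in ball 0 R, F (x, y) * ∫⁻ z, g (x - z) * g (z - y) ∂μ ∂μ ∂μ ≤
      2 * C * (∫⁻ a, g a ∂μ) * ∫⁻ x in ball 0 (R + ρ), ∫⁻ y in ball 0 (R + ρ),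
        F (x, y) * g (x - y) ∂μ ∂μ := by
  have hsplit : ∀ x y, F (x, y) * ∫⁻ z, g (x - z) * g (z - y) ∂μ ≤
      C * ((∫⁻ z, F (x, z) * g (x - z) * g (z - y) ∂μ) +
        ∫⁻ z, F (z, y) * g (x - z) * g (z - y) ∂μ) := by
    intro x y
    rw [← lintegral_add_left (by fun_prop), ← lintegral_const_mul _ (by fun_prop),
      ← lintegral_const_mul _ (by fun_prop)]
    refine lintegral_mono fun z ↦ ?_
    calc F (x, y) * (g (x - z) * g (z - y))
        ≤ C * (F (x, z) + F (z, y)) * (g (x - z) * g (z - y)) := by gcongr; exact hFC x y z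
      _ = _ := by ring
  calc ∫⁻ x in ball 0 R, ∫⁻ y in ball 0 R, F (x, y) * ∫⁻ z, g (x - z) * g (z - y) ∂μ ∂μ ∂μ
      ≤ ∫⁻ x in ball 0 R, ∫⁻ y in ball 0 R, C * ((∫⁻ z, F (x, z) * g (x - z) * g (z - y) ∂μ) +
          ∫⁻ z, F (z, y) * g (x - z) * g (z - y) ∂μ) ∂μ ∂μ :=
        lintegral_mono fun x ↦ lintegral_mono fun y ↦ hsplit x y
    _ = C * ((∫⁻ x in ball 0 R, ∫⁻ y in ball 0 R,
            ∫⁻ z, F (x, z) * g (x - z) * g (z - y) ∂μ ∂μ ∂μ) +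
          ∫⁻ x in ball 0 R, ∫⁻ y in ball 0 R, ∫⁻ z, F (z, y) * g (x - z) * g (z - y) ∂μ ∂μ ∂μ) := by
        rw [← lintegral_add_left (by fun_prop), ← lintegral_const_mul _ (by fun_prop)]
        refine lintegral_congr fun x ↦ ?_
        rw [← lintegral_add_left (by fun_prop), ← lintegral_const_mul _ (by fun_prop)]
    _ ≤ C * ((∫⁻ a, g a ∂μ) * (∫⁻ x in ball 0 (R + ρ), ∫⁻ y in ball 0 (R + ρ),
          F (x, y) * g (x - y) ∂μ ∂μ) + (∫⁻ a, g a ∂μ) * ∫⁻ x in ball 0 (R + ρ),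
            ∫⁻ y in ball 0 (R + ρ), F (x, y) * g (x - y) ∂μ ∂μ) := by
        gcongr
        · exact lintegral_ball_ball_firstStep_le hρ hg hsupp hF
        · exact lintegral_ball_ball_secondStep_le hρ hg hsupp hF
    _ = _ := by ring

end Kernel

theorem AEMeasurable.exists_measurable_ofReal_ae_eq {α : Type*} [MeasurableSpace α]
    {μ : Measure α} {f : α → ℝ} (hf : AEMeasurable f μ) {s : Set α} (hs : MeasurableSet s)
    (hsupp : support f ⊆ s) :
    ∃ g : α → ℝ≥0∞, Measurable g ∧ support g ⊆ s ∧ (fun a ↦ ENNReal.ofReal (f a)) =ᵐ[μ] g := by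
  refine ⟨s.indicator fun a ↦ ENNReal.ofReal (hf.mk f a),
    hf.measurable_mk.ennreal_ofReal.indicator hs, Set.support_indicator_subset, ?_⟩
  filter_upwards [hf.ae_eq_mk] with a ha
  by_cases has : a ∈ s
  · simp [has, ha]
  · simp [has, notMem_support.mp fun h ↦ has (hsupp h)]

section Convolution

variable {G : Type*} [AddCommGroup G] [MeasurableSpace G] [MeasurableAdd G] [MeasurableNeg G]
  {μ : Measure G} [μ.IsAddLeftInvariant] [μ.IsNegInvariant] {q : G → ℝ} {g : G → ℝ≥0∞}

theorem ae_sub_left_of_ae {p : G → Prop} (h : ∀ᵐ a ∂μ, p a) (w : G) : ∀ᵐ t ∂μ, p (w - t) :=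
  (Measure.measurePreserving_sub_left μ w).quasiMeasurePreserving.ae h

theorem ofReal_integral_mul_sub_le (hq0 : 0 ≤ᵐ[μ] q)
    (hqg : (fun a ↦ ENNReal.ofReal (q a)) =ᵐ[μ] g) (w : G) :
    ENNReal.ofReal (∫ t, q t * q (w - t) ∂μ) ≤ ∫⁻ t, g t * g (w - t) ∂μ := by
  have hq0' := ae_sub_left_of_ae hq0 w
  refine (ofReal_integral_le_lintegral_ofReal ?_).trans_eq (lintegral_congr_ae ?_)
  · filter_upwards [hq0, hq0'] with t h₁ h₂ using mul_nonneg h₁ h₂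
  · filter_upwards [hq0, hqg, ae_sub_left_of_ae hqg w] with t h₁ h₂ h₃
    rw [ENNReal.ofReal_mul h₁, h₂, h₃]

theorem lintegral_mul_sub_sub_eq (x y : G) :
    ∫⁻ t, g t * g (x - y - t) ∂μ = ∫⁻ z, g (x - z) * g (z - y) ∂μ := by
  rw [← lintegral_sub_left_eq_self _ x]
  simp only [sub_sub_sub_cancel_left]

end Convolution

theorem stmt_3_general {d : ℕ} (q : EuclideanSpace ℝ (Fin d) → ℝ)
    (hq : Integrable q) (hq0 : ∀ᵐ x ∂(volume : Measure (EuclideanSpace ℝ (Fin d))), 0 ≤ q x)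
    (ρ : ℝ) (hρ : 0 < ρ) (hsupp : Function.support q ⊆ ball 0 ρ)
    (R : ℝ)
    (u : EuclideanSpace ℝ (Fin d) → ℝ) (hu : Measurable u) :
    (∫⁻ x in ball (0 : EuclideanSpace ℝ (Fin d)) R,
        ∫⁻ y in ball (0 : EuclideanSpace ℝ (Fin d)) R,
          ENNReal.ofReal ((u x - u y) ^ 2 * ∫ t, q t * q (x - y - t))) ≤
      4 * ENNReal.ofReal (∫ z, q z) *
        ∫⁻ x in ball (0 : EuclideanSpace ℝ (Fin d)) (R + ρ),
          ∫⁻ y in ball (0 : EuclideanSpace ℝ (Fin d)) (R + ρ),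
            ENNReal.ofReal ((u x - u y) ^ 2 * q (x - y)) := by
  obtain ⟨g, hg, hgsupp, hqg⟩ :=
    hq.aemeasurable.exists_measurable_ofReal_ae_eq measurableSet_ball hsupp
  have hmass : ENNReal.ofReal (∫ z, q z) = ∫⁻ z, g z :=
    (ofReal_integral_eq_lintegral_ofReal hq hq0).trans (lintegral_congr_ae hqg)
  have hkernel : ∀ x, ∫⁻ y in ball 0 (R + ρ), ENNReal.ofReal ((u x - u y) ^ 2 * q (x - y)) =
      ∫⁻ y in ball 0 (R + ρ), ENNReal.ofReal ((u x - u y) ^ 2) * g (x - y) := fun x ↦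
    lintegral_congr_ae <| ae_restrict_of_ae <| by
      filter_upwards [ae_sub_left_of_ae hqg x] with y hy
      rw [ENNReal.ofReal_mul (sq_nonneg _), hy]
  calc _ ≤ ∫⁻ x in ball 0 R, ∫⁻ y in ball 0 R,
          ENNReal.ofReal ((u x - u y) ^ 2) * ∫⁻ z, g (x - z) * g (z - y) := by
        gcongr with x y
        rw [ENNReal.ofReal_mul (sq_nonneg _), ← lintegral_mul_sub_sub_eq]
        gcongr
        exact ofReal_integral_mul_sub_le hq0 hqg _
    _ ≤ 2 * 2 * (∫⁻ z, g z) * ∫⁻ x in ball 0 (R + ρ), ∫⁻ y in ball 0 (R + ρ),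
          ENNReal.ofReal ((u x - u y) ^ 2) * g (x - y) :=
        lintegral_ball_ball_mul_twoStep_le (F := fun p ↦ ENNReal.ofReal ((u p.1 - u p.2) ^ 2))
          hρ.le hg hgsupp (by fun_prop) fun x y z ↦ ofReal_sq_sub_le _ _ _
    _ = _ := by simp_rw [hkernel, hmass]; norm_num

/-- Convolution lemma (Lemma `faltung-L1-kern`): if `q ∈ L¹(ℝ^d)` is a.e. nonnegative
with support in `B_ρ(0)`, then for every `R > 0` and every measurable `u`,
`∬_{B_R×B_R} (u(x)−u(y))² (q∗q)(x−y) ≤ 4‖q‖_{L¹} ∬_{B_{R+ρ}×B_{R+ρ}} (u(x)−u(y))² q(x−y)`. -/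
theorem stmt_3 {d : ℕ} (q : EuclideanSpace ℝ (Fin d) → ℝ)
    (hq : Integrable q) (hq0 : ∀ᵐ x ∂(volume : Measure (EuclideanSpace ℝ (Fin d))), 0 ≤ q x)
    (ρ : ℝ) (hρ : 0 < ρ) (hsupp : Function.support q ⊆ ball 0 ρ)
    (R : ℝ) (hR : 0 < R)
    (u : EuclideanSpace ℝ (Fin d) → ℝ) (hu : Measurable u) :
    (∫⁻ x in ball (0 : EuclideanSpace ℝ (Fin d)) R,
        ∫⁻ y in ball (0 : EuclideanSpace ℝ (Fin d)) R,
          ENNReal.ofReal ((u x - u y) ^ 2 * ∫ t, q t * q (x - y - t))) ≤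
      4 * ENNReal.ofReal (∫ z, q z) *
        ∫⁻ x in ball (0 : EuclideanSpace ℝ (Fin d)) (R + ρ),
          ∫⁻ y in ball (0 : EuclideanSpace ℝ (Fin d)) (R + ρ),
            ENNReal.ofReal ((u x - u y) ^ 2 * q (x - y)) :=
  stmt_3_general q hq hq0 ρ hρ hsupp R u hu
end

section
/- Let Ω = B₁(0) ⊂ ℝ^d, α ∈ (0,2), k(x,y) = |x−y|^{−d−α}, and for β ∈ ℝ define g(x) = (|x|−1)^β for 1 ≤ |x| ≤ 2 and g(x) = 0 otherwise. Then ∬_{B₁ × ℝ^d} (g(x)−g(y))² |x−y|^{−d−α} dy dx < ∞ if and only if β > (α−1)/2. -/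
/-!
Since `g` vanishes on `B₁`, Tonelli turns the double integral into `∫ g(y)² K(y) dy` with
`K(y) = ∫_{B₁} |x - y|^{-d-α} dx`. For `1 < |y| ≤ 2` and `t = |y| - 1`, `K(y)` is comparable
to `t^{-α}`: from above because `B₁` lies outside `B(y, t)`, where the kernel integrates in polar
coordinates to `|S^{d-1}| t^{-α} / α`; from below because `B₁` contains a ball of radius `t` on
which `|x - y| ≤ 3t`. Hence the integral is finite iff `(|y| - 1)^{2β-α}` is integrable on the
annulus `1 < |y| ≤ 2`, which by polar coordinates again happens iff `2β - α > -1`.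
-/

open MeasureTheory Metric Set Module
open scoped ENNReal

theorem lintegral_lt_top_iff_of_le_const_mul {X : Type*} [MeasurableSpace X] {μ : Measure X}
    {f g : X → ℝ≥0∞} {c C : ℝ≥0∞} (hc : c ≠ 0) (hC : C ≠ ∞) (hlow : ∀ᵐ x ∂μ, c * g x ≤ f x)
    (hup : ∀ᵐ x ∂μ, f x ≤ C * g x) :
    ∫⁻ x, f x ∂μ < ∞ ↔ ∫⁻ x, g x ∂μ < ∞ := by
  refine ⟨fun hf ↦ ?_, fun hg ↦ ?_⟩
  · have : c * ∫⁻ x, g x ∂μ < ∞ :=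
      ((lintegral_const_mul_le c g).trans (lintegral_mono_ae hlow)).trans_lt hf
    exact ENNReal.lt_top_of_mul_ne_top_right this.ne hc
  · calc ∫⁻ x, f x ∂μ ≤ ∫⁻ x, C * g x ∂μ := lintegral_mono_ae hup
      _ = C * ∫⁻ x, g x ∂μ := lintegral_const_mul' C g hC
      _ < ∞ := ENNReal.mul_lt_top hC.lt_top hg

theorem setLIntegral_lintegral_sub_sq_mul_of_eqOn_zero {X : Type*} [MeasurableSpace X]
    {μ : Measure X} [SFinite μ] {Ω : Set X} (hΩ : MeasurableSet Ω) {g : X → ℝ}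
    {k : X → X → ℝ} (hg : Measurable g) (hk : Measurable (Function.uncurry k))
    (hgΩ : EqOn g 0 Ω) :
    ∫⁻ x in Ω, ∫⁻ y, ENNReal.ofReal ((g x - g y) ^ 2 * k x y) ∂μ ∂μ =
      ∫⁻ y, ENNReal.ofReal (g y ^ 2) * ∫⁻ x in Ω, ENNReal.ofReal (k x y) ∂μ ∂μ := by
  calc _ = ∫⁻ x in Ω, ∫⁻ y, ENNReal.ofReal (g y ^ 2) * ENNReal.ofReal (k x y) ∂μ ∂μ := by
        refine setLIntegral_congr_fun hΩ fun x hx ↦ lintegral_congr fun y ↦ ?_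
        rw [hgΩ hx, Pi.zero_apply, zero_sub, neg_sq, ENNReal.ofReal_mul (sq_nonneg _)]
    _ = ∫⁻ y, ∫⁻ x in Ω, ENNReal.ofReal (g y ^ 2) * ENNReal.ofReal (k x y) ∂μ ∂μ :=
        lintegral_lintegral_swap (by fun_prop)
    _ = _ := lintegral_congr fun y ↦ lintegral_const_mul' _ _ ENNReal.ofReal_ne_top

theorem lintegral_Ioi_rpow_of_lt {q t : ℝ} (hq : q < -1) (ht : 0 < t) :
    ∫⁻ r in Ioi t, ENNReal.ofReal (r ^ q) = ENNReal.ofReal (t ^ (q + 1) / -(q + 1)) := by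
  have hnn : 0 ≤ᵐ[volume.restrict (Ioi t)] fun r : ℝ ↦ r ^ q :=
    (ae_restrict_iff' measurableSet_Ioi).2 <| .of_forall fun r hr ↦
      Real.rpow_nonneg (ht.trans hr).le q
  rw [← ofReal_integral_eq_lintegral_ofReal (integrableOn_Ioi_rpow_of_lt hq ht) hnn,
    integral_Ioi_rpow_of_lt hq ht, neg_div, div_neg]

theorem lintegral_Ioc_one_two_sub_one_rpow_lt_top_iff (p : ℝ) :
    ∫⁻ r in Ioc 1 2, ENNReal.ofReal ((r - 1) ^ p) < ∞ ↔ -1 < p := by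
  have hnn : 0 ≤ᵐ[volume.restrict (Ioc (1 : ℝ) 2)] fun r : ℝ ↦ (r - 1) ^ p :=
    (ae_restrict_iff' measurableSet_Ioc).2 <| .of_forall fun r hr ↦
      Real.rpow_nonneg (sub_nonneg.2 hr.1.le) p
  have hshift := IntervalIntegrable.comp_sub_right_iff (f := fun s : ℝ ↦ s ^ p) (a := 0)
    (b := 1) (c := 1)
  rw [zero_add, one_add_one_eq_two] at hshift
  rw [lt_top_iff_ne_top, lintegral_ofReal_ne_top_iff_integrable
    (by fun_prop : Measurable fun r : ℝ ↦ (r - 1) ^ p).aestronglyMeasurable hnn, ← IntegrableOn,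
    ← intervalIntegrable_iff_integrableOn_Ioc_of_le one_le_two, hshift,
    intervalIntegrable_iff_integrableOn_Ioo_of_le zero_le_one,
    intervalIntegral.integrableOn_Ioo_rpow_iff one_pos]

theorem exists_norm_eq_norm_sub_eq {E : Type*} [NormedAddCommGroup E] [NormedSpace ℝ E] {y : E}
    {a : ℝ} (ha₀ : 0 ≤ a) (ha : a ≤ ‖y‖) :
    ∃ c : E, ‖c‖ = a ∧ ‖c - y‖ = ‖y‖ - a := by
  rcases eq_or_ne y 0 with rfl | hy
  · rw [norm_zero] at ha
    exact ⟨0, by simp [le_antisymm ha ha₀]⟩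
  have hy' : 0 < ‖y‖ := norm_pos_iff.2 hy
  refine ⟨(a / ‖y‖) • y, ?_, ?_⟩
  · rw [norm_smul, Real.norm_of_nonneg (by positivity), div_mul_cancel₀ _ hy'.ne']
  · rw [show (a / ‖y‖) • y - y = (a / ‖y‖ - 1) • y by rw [sub_smul, one_smul], norm_smul,
      Real.norm_of_nonpos (by rwa [sub_nonpos, div_le_one hy']), neg_sub, sub_mul, one_mul,
      div_mul_cancel₀ _ hy'.ne']

section HaarMeasure

variable {E : Type*} [NormedAddCommGroup E] [NormedSpace ℝ E] [MeasurableSpace E] [BorelSpace E]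
  [FiniteDimensional ℝ E] (μ : Measure E) [μ.IsAddHaarMeasure]

theorem lintegral_fun_norm_addHaar [Nontrivial E] {f : ℝ → ℝ≥0∞} (hf : Measurable f) :
    ∫⁻ x, f ‖x‖ ∂μ =
      μ.toSphere univ * ∫⁻ r in Ioi (0 : ℝ), ENNReal.ofReal (r ^ (finrank ℝ E - 1)) * f r := by
  have hf' : Measurable fun p : sphere (0 : E) 1 × Ioi (0 : ℝ) ↦ f p.2 := by fun_prop
  conv_lhs => rw [← restrict_compl_singleton (μ := μ) 0]
  rw [← lintegral_subtype_comap (measurableSet_singleton 0).compl fun x ↦ f ‖x‖]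
  have hpolar := μ.measurePreserving_homeomorphUnitSphereProd.lintegral_comp_emb
    (Homeomorph.measurableEmbedding _) fun p ↦ f p.2
  simp only [homeomorphUnitSphereProd_apply_snd_coe] at hpolar
  rw [hpolar, lintegral_prod _ hf'.aemeasurable]
  simp only [lintegral_const]
  rw [Measure.volumeIoiPow,
    lintegral_withDensity_eq_lintegral_mul _ (by fun_prop) (by fun_prop), mul_comm]
  exact congrArg _ (lintegral_subtype_comap measurableSet_Ioi
    fun r : ℝ ↦ ENNReal.ofReal (r ^ (finrank ℝ E - 1)) * f r)

theorem setLIntegral_unitBall_norm_sub_rpow_le [Nontrivial E] {α : ℝ} (hα : 0 < α) {y : E}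
    (hy : 1 < ‖y‖) :
    ∫⁻ x in ball 0 1, ENNReal.ofReal (‖x - y‖ ^ (-(finrank ℝ E : ℝ) - α)) ∂μ ≤
      μ.toSphere univ * ENNReal.ofReal α⁻¹ * ENNReal.ofReal ((‖y‖ - 1) ^ (-α)) := by
  set t := ‖y‖ - 1
  have ht : 0 < t := sub_pos.2 hy
  set ψ : ℝ → ℝ≥0∞ := (Ioi t).indicator fun r ↦ ENNReal.ofReal (r ^ (-(finrank ℝ E : ℝ) - α))
  have hψ : Measurable ψ := (by fun_prop : Measurable _).indicator measurableSet_Ioi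
  have hradial : ∫⁻ r in Ioi 0, ENNReal.ofReal (r ^ (finrank ℝ E - 1)) * ψ r =
      ∫⁻ r in Ioi t, ENNReal.ofReal (r ^ (-1 - α)) := by
    simp_rw [ψ, ← indicator_mul_right _ fun r ↦ ENNReal.ofReal (r ^ (finrank ℝ E - 1))]
    rw [lintegral_indicator measurableSet_Ioi, Measure.restrict_restrict measurableSet_Ioi,
      inter_eq_left.2 (Ioi_subset_Ioi ht.le)]
    refine setLIntegral_congr_fun measurableSet_Ioi fun r hr ↦ ?_
    have hr : 0 < r := ht.trans hr
    rw [← ENNReal.ofReal_mul (by positivity), ← Real.rpow_natCast, ← Real.rpow_add hr,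
      Nat.cast_sub finrank_pos]
    ring_nf
  calc ∫⁻ x in ball 0 1, ENNReal.ofReal (‖x - y‖ ^ (-(finrank ℝ E : ℝ) - α)) ∂μ
      = ∫⁻ x in ball 0 1, ψ ‖x - y‖ ∂μ := by
        refine setLIntegral_congr_fun measurableSet_ball fun x hx ↦ ?_
        have : t < ‖x - y‖ := by
          rw [mem_ball_zero_iff] at hx
          linarith [norm_sub_norm_le y x, norm_sub_rev y x]
        simp only [ψ, indicator_of_mem (mem_Ioi.2 this)]
    _ ≤ ∫⁻ x, ψ ‖x - y‖ ∂μ := setLIntegral_le_lintegral _ _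
    _ = ∫⁻ x, ψ ‖x‖ ∂μ := lintegral_sub_right_eq_self (fun x ↦ ψ ‖x‖) y
    _ = μ.toSphere univ * ENNReal.ofReal (t ^ (-α) / α) := by
        rw [lintegral_fun_norm_addHaar μ hψ, hradial, lintegral_Ioi_rpow_of_lt (by linarith) ht]
        ring_nf
    _ = _ := by rw [mul_assoc, ← ENNReal.ofReal_mul (by positivity), div_eq_inv_mul]

theorem le_setLIntegral_unitBall_norm_sub_rpow {α : ℝ} (hα : -(finrank ℝ E : ℝ) ≤ α) {y : E}
    (hy₁ : 1 < ‖y‖) (hy₂ : ‖y‖ ≤ 2) :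
    ENNReal.ofReal (3 ^ (-(finrank ℝ E : ℝ) - α)) * μ (ball 0 1) *
        ENNReal.ofReal ((‖y‖ - 1) ^ (-α)) ≤
      ∫⁻ x in ball 0 1, ENNReal.ofReal (‖x - y‖ ^ (-(finrank ℝ E : ℝ) - α)) ∂μ := by
  set s := -(finrank ℝ E : ℝ) - α with hs
  set t := ‖y‖ - 1
  have ht : 0 < t := sub_pos.2 hy₁
  obtain ⟨c, hc, hcy⟩ := exists_norm_eq_norm_sub_eq (y := y) (a := 1 - t) (by linarith)
    (by linarith)
  have hscale : (3 * t) ^ s * t ^ finrank ℝ E = 3 ^ s * t ^ (-α) := by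
    rw [Real.mul_rpow (by norm_num) ht.le, mul_assoc, ← Real.rpow_natCast, ← Real.rpow_add ht, hs]
    ring_nf
  calc _ = ENNReal.ofReal ((3 * t) ^ s) * μ (ball c t) := by
        rw [Measure.addHaar_ball_of_pos μ c ht, ← mul_assoc, ← ENNReal.ofReal_mul (by positivity),
          hscale, ENNReal.ofReal_mul (by positivity), mul_right_comm]
    _ = ∫⁻ _ in ball c t, ENNReal.ofReal ((3 * t) ^ s) ∂μ := (setLIntegral_const _ _).symm
    _ ≤ ∫⁻ x in ball c t, ENNReal.ofReal (‖x - y‖ ^ s) ∂μ := by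
        refine setLIntegral_mono' measurableSet_ball fun x hx ↦ ?_
        rw [mem_ball_iff_norm] at hx
        have h₁ := norm_sub_le_norm_sub_add_norm_sub x c y
        have h₂ := norm_sub_le_norm_sub_add_norm_sub c x y
        rw [norm_sub_rev c x] at h₂
        exact ENNReal.ofReal_le_ofReal
          (Real.rpow_le_rpow_of_nonpos (by linarith) (by linarith) (by linarith))
    _ ≤ _ := lintegral_mono_set (ball_subset_ball' (by rw [dist_zero_right, hc]; linarith))

theorem setLIntegral_annulus_sub_one_rpow_lt_top_iff [Nontrivial E] (p : ℝ) :
    ∫⁻ x in norm ⁻¹' Ioc 1 2, ENNReal.ofReal ((‖x‖ - 1) ^ p) ∂μ < ∞ ↔ -1 < p := by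
  set φ : ℝ → ℝ≥0∞ := (Ioc 1 2).indicator fun r ↦ ENNReal.ofReal ((r - 1) ^ p)
  have hφ : Measurable φ := (by fun_prop : Measurable _).indicator measurableSet_Ioc
  have hσ : μ.toSphere univ ≠ 0 := Measure.measure_univ_ne_zero.2 (Measure.toSphere_ne_zero μ)
  have hbounds (r : ℝ) : 1 * φ r ≤ ENNReal.ofReal (r ^ (finrank ℝ E - 1)) * φ r ∧
      ENNReal.ofReal (r ^ (finrank ℝ E - 1)) * φ r ≤
        ENNReal.ofReal (2 ^ (finrank ℝ E - 1)) * φ r := by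
    by_cases hr : r ∈ Ioc 1 2
    · refine ⟨by gcongr; exact ENNReal.one_le_ofReal.2 (one_le_pow₀ hr.1.le), ?_⟩
      gcongr
      exacts [zero_le_one.trans hr.1.le, hr.2]
    · simp [φ, hr]
  have hradial : ∫⁻ r in Ioi 0, φ r = ∫⁻ r in Ioc 1 2, ENNReal.ofReal ((r - 1) ^ p) := by
    rw [lintegral_indicator measurableSet_Ioc, Measure.restrict_restrict measurableSet_Ioc,
      inter_eq_left.2 (show Ioc (1 : ℝ) 2 ⊆ Ioi 0 from fun r hr ↦ zero_lt_one.trans hr.1)]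
  rw [← lintegral_indicator (measurableSet_Ioc.preimage measurable_norm)]
  change ∫⁻ x, φ ‖x‖ ∂μ < ∞ ↔ _
  rw [lintegral_fun_norm_addHaar μ hφ, ← lintegral_Ioc_one_two_sub_one_rpow_lt_top_iff,
    ← hradial, ← lintegral_lt_top_iff_of_le_const_mul one_ne_zero ENNReal.ofReal_ne_top
      (.of_forall fun r ↦ (hbounds r).1) (.of_forall fun r ↦ (hbounds r).2)]
  exact ⟨fun h ↦ ENNReal.lt_top_of_mul_ne_top_right h.ne hσ,
    fun h ↦ ENNReal.mul_lt_top (measure_ne_top _ _).lt_top h⟩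

/-- On the unit sphere the weight `0 ^ β` need not vanish (`0 ^ 0 = 1`), but the sphere is null. -/
theorem lintegral_ofReal_sq_mul_eq_setLIntegral_annulus [Nontrivial E] (β : ℝ) (K : E → ℝ≥0∞) :
    ∫⁻ y, ENNReal.ofReal ((if 1 ≤ ‖y‖ ∧ ‖y‖ ≤ 2 then (‖y‖ - 1) ^ β else 0) ^ 2) * K y ∂μ =
      ∫⁻ y in norm ⁻¹' Ioc 1 2, ENNReal.ofReal ((‖y‖ - 1) ^ (2 * β)) * K y ∂μ := by
  rw [← lintegral_indicator (measurableSet_Ioc.preimage measurable_norm)]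
  refine lintegral_congr_ae ?_
  filter_upwards [compl_mem_ae_iff.2 (Measure.addHaar_sphere μ 0 1)] with y hy
  rw [mem_compl_iff, mem_sphere_zero_iff_norm] at hy
  by_cases h : ‖y‖ ∈ Ioc 1 2
  · rw [indicator_of_mem (show y ∈ norm ⁻¹' Ioc 1 2 from h), if_pos ⟨h.1.le, h.2⟩,
      ← Real.rpow_natCast, ← Real.rpow_mul (sub_nonneg.2 h.1.le), mul_comm β]
    norm_num
  · have : ¬(1 ≤ ‖y‖ ∧ ‖y‖ ≤ 2) := fun h' ↦ h ⟨lt_of_le_of_ne h'.1 (Ne.symm hy), h'.2⟩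
    rw [indicator_of_notMem (show y ∉ norm ⁻¹' Ioc 1 2 from h), if_neg this]
    simp

theorem setLIntegral_lintegral_sub_sq_mul_rpow_lt_top_iff [Nontrivial E] {α : ℝ} (hα : 0 < α)
    (β : ℝ) :
    (∫⁻ x in ball (0 : E) 1, ∫⁻ y,
        ENNReal.ofReal
          (((if 1 ≤ ‖x‖ ∧ ‖x‖ ≤ 2 then (‖x‖ - 1) ^ β else 0) -
              (if 1 ≤ ‖y‖ ∧ ‖y‖ ≤ 2 then (‖y‖ - 1) ^ β else 0)) ^ 2 *
            ‖x - y‖ ^ (-(finrank ℝ E : ℝ) - α)) ∂μ ∂μ) < ∞ ↔ (α - 1) / 2 < β := by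
  have hg : Measurable fun y : E ↦ if 1 ≤ ‖y‖ ∧ ‖y‖ ≤ 2 then (‖y‖ - 1) ^ β else 0 :=
    Measurable.ite ((measurableSet_le measurable_const measurable_norm).inter
      (measurableSet_le measurable_norm measurable_const)) (by fun_prop) measurable_const
  have hg₀ : EqOn (fun y : E ↦ if 1 ≤ ‖y‖ ∧ ‖y‖ ≤ 2 then (‖y‖ - 1) ^ β else 0) 0 (ball 0 1) :=
    fun x hx ↦ if_neg fun h ↦ (mem_ball_zero_iff.1 hx).not_ge h.1
  have hsplit (y : E) (hy : 1 < ‖y‖) : ENNReal.ofReal ((‖y‖ - 1) ^ (2 * β - α)) =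
      ENNReal.ofReal ((‖y‖ - 1) ^ (2 * β)) * ENNReal.ofReal ((‖y‖ - 1) ^ (-α)) := by
    rw [← ENNReal.ofReal_mul (by positivity), ← Real.rpow_add (sub_pos.2 hy), ← sub_eq_add_neg]
  have hA : MeasurableSet (norm ⁻¹' Ioc (1 : ℝ) 2 : Set E) :=
    measurableSet_Ioc.preimage measurable_norm
  rw [setLIntegral_lintegral_sub_sq_mul_of_eqOn_zero measurableSet_ball hg (by fun_prop) hg₀,
    lintegral_ofReal_sq_mul_eq_setLIntegral_annulus,
    lintegral_lt_top_iff_of_le_const_mul (g := fun y ↦ ENNReal.ofReal ((‖y‖ - 1) ^ (2 * β - α)))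
      (c := ENNReal.ofReal (3 ^ (-(finrank ℝ E : ℝ) - α)) * μ (ball 0 1))
      (C := μ.toSphere univ * ENNReal.ofReal α⁻¹) ?_ ?_ ?_ ?_,
    setLIntegral_annulus_sub_one_rpow_lt_top_iff]
  · constructor <;> intro h <;> linarith
  · exact mul_ne_zero (ENNReal.ofReal_pos.2 (by positivity)).ne'
      (measure_ball_pos _ _ one_pos).ne'
  · exact ENNReal.mul_ne_top (measure_ne_top _ _) ENNReal.ofReal_ne_top
  · refine (ae_restrict_iff' hA).2 <| .of_forall fun y hy ↦ ?_
    calc _ = ENNReal.ofReal ((‖y‖ - 1) ^ (2 * β)) *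
          (ENNReal.ofReal (3 ^ (-(finrank ℝ E : ℝ) - α)) * μ (ball 0 1) *
            ENNReal.ofReal ((‖y‖ - 1) ^ (-α))) := by rw [hsplit y hy.1]; ring
      _ ≤ _ := by
          gcongr
          exact le_setLIntegral_unitBall_norm_sub_rpow μ
            ((neg_nonpos.2 (Nat.cast_nonneg _)).trans hα.le) hy.1 hy.2
  · refine (ae_restrict_iff' hA).2 <| .of_forall fun y hy ↦ ?_
    calc _ ≤ ENNReal.ofReal ((‖y‖ - 1) ^ (2 * β)) *
          (μ.toSphere univ * ENNReal.ofReal α⁻¹ * ENNReal.ofReal ((‖y‖ - 1) ^ (-α))) := by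
          gcongr
          exact setLIntegral_unitBall_norm_sub_rpow_le μ hα hy.1
      _ = _ := by rw [hsplit y hy.1]; ring

end HaarMeasure

/-- Example `randwerte`: for `Ω = B₁(0)`, `k(x,y) = |x−y|^{−d−α}` and
`g(x) = (|x|−1)^β` on `1 ≤ |x| ≤ 2`, `g = 0` elsewhere, one has
`∬_{B₁×ℝ^d} (g(x)−g(y))² |x−y|^{−d−α} dy dx < ∞ ↔ β > (α−1)/2`. -/
theorem stmt_8 {d : ℕ} (hd : 0 < d) (α β : ℝ) (hα : α ∈ Set.Ioo (0 : ℝ) 2) :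
    (∫⁻ x in ball (0 : EuclideanSpace ℝ (Fin d)) 1, ∫⁻ y,
        ENNReal.ofReal
          (((if 1 ≤ ‖x‖ ∧ ‖x‖ ≤ 2 then (‖x‖ - 1) ^ β else 0) -
              (if 1 ≤ ‖y‖ ∧ ‖y‖ ≤ 2 then (‖y‖ - 1) ^ β else 0)) ^ 2 *
            ‖x - y‖ ^ (-(d : ℝ) - α))) < ⊤ ↔ (α - 1) / 2 < β := by
  have : Nonempty (Fin d) := ⟨⟨0, hd⟩⟩
  simpa only [finrank_euclideanSpace_fin] using
    setLIntegral_lintegral_sub_sq_mul_rpow_lt_top_iff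
      (volume : Measure (EuclideanSpace ℝ (Fin d))) hα.1 β
end

section
/- Let Ω ⊂ ℝ^d be open and bounded, and suppose the symmetric part k_s of a kernel k satisfies (E_α): ∬(u(x)−u(y))²k_s(x,y)dydx ≥ λ α(2−α) ∬ (u(x)−u(y))²|x−y|^{−d−α} dydx for some α ∈ (0,2), λ > 0, and all u ∈ L²(ℝ^d). Then the embedding of H_Ω(ℝ^d;k) into L²(Ω) is compact. -/
open MeasureTheory ENNReal

variable {d : ℕ}

/-- Symmetric part of a real-valued kernel. -/
noncomputable def kSym (k : EuclideanSpace ℝ (Fin d) → EuclideanSpace ℝ (Fin d) → ℝ)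
    (x y : EuclideanSpace ℝ (Fin d)) : ℝ := (k x y + k y x) / 2

/-- The nonlocal energy `∬ (u(x)−u(y))² k_s(x,y) dy dx ∈ [0,∞]`. -/
noncomputable def energy (k : EuclideanSpace ℝ (Fin d) → EuclideanSpace ℝ (Fin d) → ℝ)
    (u : EuclideanSpace ℝ (Fin d) → ℝ) : ℝ≥0∞ :=
  ∫⁻ x, ∫⁻ y, ENNReal.ofReal ((u x - u y) ^ 2 * kSym k x y)

/-!
By (E_α) and the energy bound, the sequence has uniformly bounded Gagliardo energy
`∬ (u x - u y)² ‖x - y‖^(-d-α)`, and it vanishes outside a fixed ball. Replacing a function by its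
averages over the cubes of a grid of mesh `h` costs at most `√d^(d+α) h^α` times its Gagliardo
energy in squared `L²` norm (Cauchy–Schwarz on each cube, on which `‖x - y‖ ≤ √d h`), and these
averages lie in the finite-dimensional span of the indicators of the finitely many cubes meeting the
ball. So the sequence is totally bounded in `L²`, and completeness of `L²` gives a convergent
subsequence.
-/

open Filter Topology

theorem eLpNorm_two_sq_eq_lintegral {α : Type*} [MeasurableSpace α] {μ : Measure α}
    (f : α → ℝ) : eLpNorm f 2 μ ^ 2 = ∫⁻ x, ENNReal.ofReal (f x ^ 2) ∂μ := by
  have h := eLpNorm_nnreal_pow_eq_lintegral (f := f) (μ := μ) (p := 2) two_ne_zero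
  simp only [ENNReal.coe_ofNat, NNReal.coe_ofNat, ENNReal.rpow_two] at h
  rw [h]
  congr 1 with x
  rw [Real.enorm_eq_ofReal_abs, ← ENNReal.ofReal_pow (abs_nonneg _), sq_abs]

theorem ofReal_sq_setIntegral_le {α : Type*} [MeasurableSpace α] {μ : Measure α} {s : Set α}
    {g : α → ℝ} (hg : AEStronglyMeasurable g (μ.restrict s)) :
    ENNReal.ofReal ((∫ y in s, g y ∂μ) ^ 2) ≤ (∫⁻ y in s, ENNReal.ofReal (g y ^ 2) ∂μ) * μ s := by
  have hHolder := eLpNorm_le_eLpNorm_mul_rpow_measure_univ (p := 1) (q := 2) one_le_two hg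
  rw [eLpNorm_one_eq_lintegral_enorm, Measure.restrict_apply_univ] at hHolder
  calc ENNReal.ofReal ((∫ y in s, g y ∂μ) ^ 2) = ‖∫ y in s, g y ∂μ‖ₑ ^ 2 := by
        rw [Real.enorm_eq_ofReal_abs, ← ENNReal.ofReal_pow (abs_nonneg _), sq_abs]
    _ ≤ (eLpNorm g 2 (μ.restrict s) * μ s ^ (1 / (1 : ℝ≥0∞).toReal - 1 / (2 : ℝ≥0∞).toReal)) ^ 2 :=
        pow_le_pow_left' ((enorm_integral_le_lintegral_enorm _).trans hHolder) 2
    _ = (∫⁻ y in s, ENNReal.ofReal (g y ^ 2) ∂μ) * μ s := by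
        rw [mul_pow, eLpNorm_two_sq_eq_lintegral, ← ENNReal.rpow_natCast, ← ENNReal.rpow_mul]
        norm_num

theorem totallyBounded_of_forall_exists_finiteDimensional {E : Type*} [NormedAddCommGroup E]
    [NormedSpace ℝ E] {s : Set E} (hs : Bornology.IsBounded s)
    (happrox : ∀ ε > 0, ∃ F : Submodule ℝ E, FiniteDimensional ℝ F ∧
      ∀ x ∈ s, ∃ y ∈ F, dist x y ≤ ε) :
    TotallyBounded s := by
  obtain ⟨R, hR⟩ := hs.subset_closedBall 0
  refine Metric.totallyBounded_iff.2 fun ε hε => ?_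
  obtain ⟨F, hF, hsF⟩ := happrox (ε / 2) (half_pos hε)
  have hK : IsCompact (Subtype.val '' Metric.closedBall (0 : F) (R + ε / 2)) :=
    (isCompact_closedBall _ _).image continuous_subtype_val
  obtain ⟨t, ht, hKt⟩ := Metric.totallyBounded_iff.1 hK.totallyBounded (ε / 2) (half_pos hε)
  refine ⟨t, ht, fun x hx => ?_⟩
  obtain ⟨y, hyF, hxy⟩ := hsF x hx
  have hyK : y ∈ Subtype.val '' Metric.closedBall (0 : F) (R + ε / 2) := by
    refine ⟨⟨y, hyF⟩, ?_, rfl⟩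
    have hxR := mem_closedBall_zero_iff.1 (hR hx)
    rw [mem_closedBall_zero_iff, Submodule.coe_norm]
    linarith [norm_le_norm_add_norm_sub' y x, dist_eq_norm x y, norm_sub_rev x y]
  obtain ⟨z, hzt, hyz⟩ := Set.mem_iUnion₂.1 (hKt hyK)
  refine Set.mem_iUnion₂.2 ⟨z, hzt, Metric.mem_ball.2 ?_⟩
  linarith [dist_triangle x y z, Metric.mem_ball.1 hyz]

def gridCell (h : ℝ) (z : Fin d → ℤ) : Set (EuclideanSpace ℝ (Fin d)) :=
  {x | ∀ i, x i ∈ Set.Ico (z i * h) (z i * h + h)}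

noncomputable def gridIndex (h : ℝ) (x : EuclideanSpace ℝ (Fin d)) : Fin d → ℤ :=
  fun i => ⌊x i / h⌋

theorem mem_gridCell_iff {h : ℝ} (hh : 0 < h) {z : Fin d → ℤ} {x : EuclideanSpace ℝ (Fin d)} :
    x ∈ gridCell h z ↔ gridIndex h x = z := by
  simp only [gridCell, gridIndex, Set.mem_ofPred_eq, Set.mem_Ico, funext_iff, Int.floor_eq_iff,
    le_div_iff₀ hh, div_lt_iff₀ hh, add_mul, one_mul]

theorem gridCell_eq_preimage (h : ℝ) (z : Fin d → ℤ) :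
    gridCell h z = (MeasurableEquiv.toLp 2 (Fin d → ℝ)).symm ⁻¹'
      Set.univ.pi fun i => Set.Ico ((z i : ℝ) * h) (z i * h + h) := by
  ext x; simp [gridCell]

theorem measurableSet_gridCell (h : ℝ) (z : Fin d → ℤ) : MeasurableSet (gridCell h z) := by
  rw [gridCell_eq_preimage]
  exact MeasurableEquiv.measurable _ (MeasurableSet.univ_pi fun _ => measurableSet_Ico)

theorem volume_gridCell (h : ℝ) (z : Fin d → ℤ) :
    volume (gridCell h z) = ENNReal.ofReal h ^ d := by
  rw [gridCell_eq_preimage,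
    (EuclideanSpace.volume_preserving_symm_measurableEquiv_toLp (Fin d)).measure_preimage
      (MeasurableSet.univ_pi fun _ => measurableSet_Ico).nullMeasurableSet, volume_pi_pi]
  simp [Real.volume_Ico]

theorem volume_gridCell_ne_top (h : ℝ) (z : Fin d → ℤ) : volume (gridCell h z) ≠ ⊤ := by
  rw [volume_gridCell]; exact pow_ne_top ofReal_ne_top

theorem norm_sub_le_of_mem_gridCell {h : ℝ} (hh : 0 < h) {z : Fin d → ℤ}
    {x y : EuclideanSpace ℝ (Fin d)} (hx : x ∈ gridCell h z) (hy : y ∈ gridCell h z) :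
    ‖x - y‖ ≤ √d * h := by
  have hcoord : ∀ i, ‖(x - y) i‖ ^ 2 ≤ h ^ 2 := fun i => by
    obtain ⟨hx₁, hx₂⟩ := hx i
    obtain ⟨hy₁, hy₂⟩ := hy i
    rw [PiLp.sub_apply, Real.norm_eq_abs, sq_abs]
    exact sq_le_sq' (by linarith) (by linarith)
  rw [EuclideanSpace.norm_eq, ← Real.sqrt_sq hh.le, ← Real.sqrt_mul (Nat.cast_nonneg _)]
  gcongr
  simpa using Finset.sum_le_sum fun i (_ : i ∈ Finset.univ) => hcoord i

noncomputable def gridIndices (h R : ℝ) : Finset (Fin d → ℤ) :=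
  Finset.Icc (fun _ => ⌊-R / h⌋) (fun _ => ⌊R / h⌋)

theorem gridIndex_mem_gridIndices {h R : ℝ} (hh : 0 < h) {x : EuclideanSpace ℝ (Fin d)}
    (hx : x ∈ Metric.ball 0 R) : gridIndex h x ∈ gridIndices h R := by
  have hxi : ∀ i, |x i| ≤ R := fun i =>
    ((Real.norm_eq_abs _).symm.trans_le (PiLp.norm_apply_le x i)).trans (mem_ball_zero_iff.1 hx).le
  simp only [gridIndices, gridIndex, Finset.mem_Icc, Pi.le_def]
  exact ⟨fun i => Int.floor_mono (div_le_div_of_nonneg_right (neg_le_of_abs_le (hxi i)) hh.le),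
    fun i => Int.floor_mono (div_le_div_of_nonneg_right (le_of_abs_le (hxi i)) hh.le)⟩

noncomputable def cellAverage (h : ℝ) (u : EuclideanSpace ℝ (Fin d) → ℝ)
    (x : EuclideanSpace ℝ (Fin d)) : ℝ :=
  (∫ y in gridCell h (gridIndex h x), u y) / h ^ d

theorem sub_cellAverage_eq {h : ℝ} (hh : 0 < h) {u : EuclideanSpace ℝ (Fin d) → ℝ}
    (hu : MemLp u 2) (x : EuclideanSpace ℝ (Fin d)) :
    u x - cellAverage h u x = (∫ y in gridCell h (gridIndex h x), (u x - u y)) / h ^ d := by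
  set s := gridCell h (gridIndex h x)
  have : IsFiniteMeasure (volume.restrict s) :=
    isFiniteMeasure_restrict.2 (volume_gridCell_ne_top h _)
  rw [integral_sub (integrable_const _) ((hu.restrict s).integrable one_le_two), setIntegral_const,
    measureReal_def, volume_gridCell, ← ENNReal.ofReal_pow hh.le,
    ENNReal.toReal_ofReal (by positivity), cellAverage, smul_eq_mul, sub_div,
    mul_div_cancel_left₀ _ (by positivity)]

theorem ofReal_sq_sub_cellAverage_le {h : ℝ} (hh : 0 < h) {u : EuclideanSpace ℝ (Fin d) → ℝ}
    (hu : Measurable u) (hu2 : MemLp u 2) (x : EuclideanSpace ℝ (Fin d)) :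
    ENNReal.ofReal ((u x - cellAverage h u x) ^ 2) ≤
      (∫⁻ y in gridCell h (gridIndex h x), ENNReal.ofReal ((u x - u y) ^ 2)) /
        ENNReal.ofReal (h ^ d) := by
  set s := gridCell h (gridIndex h x)
  have hV : (0 : ℝ) < h ^ d := by positivity
  have hs : volume s = ENNReal.ofReal (h ^ d) := by rw [volume_gridCell, ENNReal.ofReal_pow hh.le]
  have hCS := ofReal_sq_setIntegral_le (μ := volume) (s := s) (g := fun y => u x - u y)
    (measurable_const.sub hu).aestronglyMeasurable
  rw [hs] at hCS
  rw [sub_cellAverage_eq hh hu2, div_pow, ENNReal.ofReal_div_of_pos (by positivity),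
    ENNReal.ofReal_pow hV.le]
  calc ENNReal.ofReal ((∫ y in s, (u x - u y)) ^ 2) / ENNReal.ofReal (h ^ d) ^ 2
      ≤ (∫⁻ y in s, ENNReal.ofReal ((u x - u y) ^ 2)) * ENNReal.ofReal (h ^ d) /
          ENNReal.ofReal (h ^ d) ^ 2 := ENNReal.div_le_div_right hCS _
    _ = (∫⁻ y in s, ENNReal.ofReal ((u x - u y) ^ 2)) / ENNReal.ofReal (h ^ d) := by
        rw [sq, ENNReal.mul_div_mul_right _ _ (by simpa using hV) ofReal_ne_top]

noncomputable def gagliardoEnergy (α : ℝ) (u : EuclideanSpace ℝ (Fin d) → ℝ) : ℝ≥0∞ :=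
  ∫⁻ x, ∫⁻ y, ENNReal.ofReal ((u x - u y) ^ 2 * ‖x - y‖ ^ (-(d : ℝ) - α))

theorem gagliardoEnergy_congr_ae {α : ℝ} {u v : EuclideanSpace ℝ (Fin d) → ℝ}
    (huv : u =ᵐ[volume] v) :
    gagliardoEnergy α u = gagliardoEnergy α v := by
  refine lintegral_congr_ae ?_
  filter_upwards [huv] with x hx
  refine lintegral_congr_ae ?_
  filter_upwards [huv] with y hy
  rw [hx, hy]

theorem ofReal_sq_sub_le_of_norm_sub_le {α D : ℝ} (hα : 0 < α) {x y : EuclideanSpace ℝ (Fin d)}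
    (hxy : ‖x - y‖ ≤ D) (u : EuclideanSpace ℝ (Fin d) → ℝ) :
    ENNReal.ofReal ((u x - u y) ^ 2) ≤
      ENNReal.ofReal (D ^ ((d : ℝ) + α)) *
        ENNReal.ofReal ((u x - u y) ^ 2 * ‖x - y‖ ^ (-(d : ℝ) - α)) := by
  rcases eq_or_ne x y with rfl | hne
  · simp
  have hr : 0 < ‖x - y‖ := norm_pos_iff.2 (sub_ne_zero.2 hne)
  have hs : 0 < (d : ℝ) + α := by positivity
  have hD : 1 ≤ D ^ ((d : ℝ) + α) * ‖x - y‖ ^ (-(d : ℝ) - α) := by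
    rw [show -(d : ℝ) - α = -((d : ℝ) + α) by ring, Real.rpow_neg hr.le, ← div_eq_mul_inv,
      one_le_div (Real.rpow_pos_of_pos hr _)]
    exact Real.rpow_le_rpow hr.le hxy hs.le
  rw [← ENNReal.ofReal_mul (Real.rpow_nonneg (hr.le.trans hxy) _)]
  refine ENNReal.ofReal_le_ofReal ?_
  nlinarith [sq_nonneg (u x - u y)]

theorem lintegral_sq_sub_cellAverage_le {h α : ℝ} (hh : 0 < h) (hα : 0 < α)
    {u : EuclideanSpace ℝ (Fin d) → ℝ} (hu : Measurable u) (hu2 : MemLp u 2) :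
    ∫⁻ x, ENNReal.ofReal ((u x - cellAverage h u x) ^ 2) ≤
      ENNReal.ofReal (√d ^ ((d : ℝ) + α) * h ^ α) * gagliardoEnergy α u := by
  set K := ENNReal.ofReal (√d ^ ((d : ℝ) + α) * h ^ α)
  have hK : ENNReal.ofReal ((√d * h) ^ ((d : ℝ) + α)) / ENNReal.ofReal (h ^ d) = K := by
    rw [← ENNReal.ofReal_div_of_pos (by positivity), Real.mul_rpow (Real.sqrt_nonneg _) hh.le,
      Real.rpow_add hh, Real.rpow_natCast, mul_div_assoc, mul_div_cancel_left₀ _ (by positivity)]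
  have hpoint : ∀ x, ENNReal.ofReal ((u x - cellAverage h u x) ^ 2) ≤
      K * ∫⁻ y, ENNReal.ofReal ((u x - u y) ^ 2 * ‖x - y‖ ^ (-(d : ℝ) - α)) := fun x => by
    have hx : x ∈ gridCell h (gridIndex h x) := (mem_gridCell_iff hh).2 rfl
    calc ENNReal.ofReal ((u x - cellAverage h u x) ^ 2)
        ≤ (∫⁻ y in gridCell h (gridIndex h x), ENNReal.ofReal ((u x - u y) ^ 2)) /
            ENNReal.ofReal (h ^ d) := ofReal_sq_sub_cellAverage_le hh hu hu2 x
      _ ≤ (∫⁻ y in gridCell h (gridIndex h x), ENNReal.ofReal ((√d * h) ^ ((d : ℝ) + α)) *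
            ENNReal.ofReal ((u x - u y) ^ 2 * ‖x - y‖ ^ (-(d : ℝ) - α))) /
              ENNReal.ofReal (h ^ d) :=
          ENNReal.div_le_div_right (setLIntegral_mono' (measurableSet_gridCell _ _)
            fun y hy => ofReal_sq_sub_le_of_norm_sub_le hα (norm_sub_le_of_mem_gridCell hh hx hy) u) _
      _ ≤ K * ∫⁻ y, ENNReal.ofReal ((u x - u y) ^ 2 * ‖x - y‖ ^ (-(d : ℝ) - α)) := by
          rw [lintegral_const_mul' _ _ ofReal_ne_top, div_eq_mul_inv, mul_right_comm,
            ← div_eq_mul_inv, hK]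
          gcongr
          exact Measure.restrict_le_self
  calc ∫⁻ x, ENNReal.ofReal ((u x - cellAverage h u x) ^ 2)
      ≤ ∫⁻ x, K * ∫⁻ y, ENNReal.ofReal ((u x - u y) ^ 2 * ‖x - y‖ ^ (-(d : ℝ) - α)) :=
        lintegral_mono hpoint
    _ = K * gagliardoEnergy α u := lintegral_const_mul' _ _ ofReal_ne_top

theorem setIntegral_gridCell_eq_zero {h R : ℝ} (hh : 0 < h) {u : EuclideanSpace ℝ (Fin d) → ℝ}
    (hu : ∀ᵐ x ∂volume, x ∉ Metric.ball 0 R → u x = 0) {z : Fin d → ℤ}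
    (hz : z ∉ gridIndices h R) : ∫ y in gridCell h z, u y = 0 := by
  refine setIntegral_eq_zero_of_ae_eq_zero ?_
  filter_upwards [hu] with y hy hyz
  exact hy fun hyR => hz ((mem_gridCell_iff hh).1 hyz ▸ gridIndex_mem_gridIndices hh hyR)

theorem cellAverage_eq_sum_indicator {h R : ℝ} (hh : 0 < h) {u : EuclideanSpace ℝ (Fin d) → ℝ}
    (hu : ∀ᵐ x ∂volume, x ∉ Metric.ball 0 R → u x = 0) (x : EuclideanSpace ℝ (Fin d)) :
    cellAverage h u x = ∑ z ∈ gridIndices h R,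
      (gridCell h z).indicator (fun _ => (∫ y in gridCell h z, u y) / h ^ d) x := by
  simp only [Set.indicator, mem_gridCell_iff hh, Finset.sum_ite_eq]
  split_ifs with hx
  · rfl
  · rw [cellAverage, setIntegral_gridCell_eq_zero hh hu hx, zero_div]

noncomputable def cellIndicator (h : ℝ) (z : Fin d → ℤ) :
    Lp ℝ 2 (volume : Measure (EuclideanSpace ℝ (Fin d))) :=
  indicatorConstLp 2 (measurableSet_gridCell h z) (volume_gridCell_ne_top h z) 1

theorem cellAverage_ae_eq_sum_cellIndicator {h R : ℝ} (hh : 0 < h)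
    {u : EuclideanSpace ℝ (Fin d) → ℝ} (hu : ∀ᵐ x ∂volume, x ∉ Metric.ball 0 R → u x = 0) :
    cellAverage h u =ᵐ[volume]
      ⇑(∑ z ∈ gridIndices h R, ((∫ y in gridCell h z, u y) / h ^ d) • cellIndicator h z) := by
  have hterm : ∀ᵐ x ∂volume, ∀ z ∈ gridIndices h R,
      (((∫ y in gridCell h z, u y) / h ^ d) • cellIndicator h z) x =
        (gridCell h z).indicator (fun _ => (∫ y in gridCell h z, u y) / h ^ d) x := by
    refine (Finset.eventually_all _).2 fun z _ => ?_
    filter_upwards [Lp.coeFn_smul ((∫ y in gridCell h z, u y) / h ^ d) (cellIndicator h z),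
      indicatorConstLp_coeFn (p := 2) (hs := measurableSet_gridCell h z)
        (hμs := volume_gridCell_ne_top h z) (c := (1 : ℝ))] with x hsmul hind
    rw [hsmul, Pi.smul_apply, cellIndicator, hind]
    by_cases hx : x ∈ gridCell h z <;> simp [hx]
  filter_upwards [Lp.coeFn_finsetSum (gridIndices h R) fun z =>
    ((∫ y in gridCell h z, u y) / h ^ d) • cellIndicator h z, hterm] with x hsum hx
  rw [hsum, Finset.sum_apply, cellAverage_eq_sum_indicator hh hu x]
  exact Finset.sum_congr rfl fun z hz => (hx z hz).symm

theorem totallyBounded_setOf_gagliardoEnergy_le {α : ℝ} (hα : 0 < α) (R B : ℝ) {M : ℝ≥0∞}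
    (hM : M ≠ ⊤) :
    TotallyBounded {f : Lp ℝ 2 (volume : Measure (EuclideanSpace ℝ (Fin d))) |
      ‖f‖ ≤ B ∧ (∀ᵐ x ∂volume, x ∉ Metric.ball 0 R → f x = 0) ∧ gagliardoEnergy α f ≤ M} := by
  refine totallyBounded_of_forall_exists_finiteDimensional
    (isBounded_iff_forall_norm_le.2 ⟨B, fun f hf => hf.1⟩) fun ε hε => ?_
  have hsmall : Tendsto (fun h : ℝ => ENNReal.ofReal (√d ^ ((d : ℝ) + α) * h ^ α) * M)
      (𝓝[>] 0) (𝓝 0) := by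
    have : Tendsto (fun h : ℝ => √d ^ ((d : ℝ) + α) * h ^ α) (𝓝 0) (𝓝 0) := by
      simpa [Real.zero_rpow hα.ne'] using
        ((Real.continuousAt_rpow_const 0 α (Or.inr hα.le)).const_mul (√d ^ ((d : ℝ) + α))).tendsto
    simpa using ENNReal.Tendsto.mul_const
      (ENNReal.tendsto_ofReal (this.mono_left nhdsWithin_le_nhds)) (Or.inr hM)
  obtain ⟨h, hhε, hh : 0 < h⟩ := ((hsmall.eventually
    (gt_mem_nhds (ENNReal.pow_pos (ofReal_pos.2 hε) 2))).and self_mem_nhdsWithin).exists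
  refine ⟨Submodule.span ℝ (cellIndicator h '' gridIndices (d := d) h R),
    FiniteDimensional.span_of_finite ℝ ((gridIndices h R).finite_toSet.image (cellIndicator h)), ?_⟩
  rintro f ⟨-, hfR, hfM⟩
  refine ⟨∑ z ∈ gridIndices h R, ((∫ y in gridCell h z, f y) / h ^ d) • cellIndicator h z,
    Submodule.sum_mem _ fun z hz => Submodule.smul_mem _ _
      (Submodule.subset_span (Set.mem_image_of_mem _ hz)), ?_⟩
  rw [dist_edist, Lp.edist_def, eLpNorm_congr_ae (EventuallyEq.sub EventuallyEq.rfl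
    (cellAverage_ae_eq_sum_cellIndicator hh hfR).symm)]
  refine ENNReal.toReal_le_of_le_ofReal hε.le ((ENNReal.pow_le_pow_left_iff two_ne_zero).1 ?_)
  calc eLpNorm (⇑f - cellAverage h ⇑f) 2 volume ^ 2
      = ∫⁻ x, ENNReal.ofReal ((f x - cellAverage h f x) ^ 2) := eLpNorm_two_sq_eq_lintegral _
    _ ≤ ENNReal.ofReal (√d ^ ((d : ℝ) + α) * h ^ α) * gagliardoEnergy α f :=
        lintegral_sq_sub_cellAverage_le hh hα (Lp.stronglyMeasurable f).measurable (Lp.memLp f)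
    _ ≤ ENNReal.ofReal ε ^ 2 := (mul_le_mul_right hfM _).trans hhε.le

theorem stmt_14_general (Ω : Set (EuclideanSpace ℝ (Fin d)))
    (hΩb : Bornology.IsBounded Ω)
    (k : EuclideanSpace ℝ (Fin d) → EuclideanSpace ℝ (Fin d) → ℝ)
    (α lam : ℝ) (hα : α ∈ Set.Ioo (0 : ℝ) 2) (hlam : 0 < lam)
    (hE : ∀ u : EuclideanSpace ℝ (Fin d) → ℝ, MemLp u 2 →
      ENNReal.ofReal (lam * α * (2 - α)) *
          (∫⁻ x, ∫⁻ y, ENNReal.ofReal ((u x - u y) ^ 2 * ‖x - y‖ ^ (-(d : ℝ) - α))) ≤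
        energy k u)
    (u : ℕ → EuclideanSpace ℝ (Fin d) → ℝ)
    (hu2 : ∀ n, MemLp (u n) 2)
    (huΩ : ∀ n, ∀ᵐ x ∂(volume : Measure (EuclideanSpace ℝ (Fin d))), x ∉ Ω → u n x = 0)
    (C : ℝ≥0∞) (hC : C < ⊤)
    (hbdd : ∀ n, (∫⁻ x, ENNReal.ofReal ((u n x) ^ 2)) + energy k (u n) ≤ C) :
    ∃ φ : ℕ → ℕ, StrictMono φ ∧ ∃ v : EuclideanSpace ℝ (Fin d) → ℝ, MemLp v 2 ∧
      Filter.Tendsto (fun n => eLpNorm (fun x => u (φ n) x - v x) 2 volume)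
        Filter.atTop (nhds 0) := by
  obtain ⟨R, hΩR⟩ := hΩb.subset_ball 0
  have hc : ENNReal.ofReal (lam * α * (2 - α)) ≠ 0 :=
    (ofReal_pos.2 (mul_pos (mul_pos hlam hα.1) (sub_pos.2 hα.2))).ne'
  set U : ℕ → Lp ℝ 2 (volume : Measure (EuclideanSpace ℝ (Fin d))) := fun n => (hu2 n).toLp (u n)
  have hnorm : ∀ n, ‖U n‖ ≤ √C.toReal := fun n => by
    refine Real.le_sqrt_of_sq_le ?_
    rw [Lp.norm_toLp, ← ENNReal.toReal_pow, eLpNorm_two_sq_eq_lintegral]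
    exact ENNReal.toReal_mono hC.ne (le_self_add.trans (hbdd n))
  have hsupp : ∀ n, ∀ᵐ x ∂volume, x ∉ Metric.ball 0 R → U n x = 0 := fun n => by
    filter_upwards [(hu2 n).coeFn_toLp, huΩ n] with x hx hxΩ hxR
    rw [hx, hxΩ fun h => hxR (hΩR h)]
  have henergy : ∀ n, gagliardoEnergy α (U n) ≤ C / ENNReal.ofReal (lam * α * (2 - α)) :=
      fun n => by
    rw [gagliardoEnergy_congr_ae (hu2 n).coeFn_toLp, ENNReal.le_div_iff_mul_le (Or.inl hc)
      (Or.inl ofReal_ne_top), mul_comm]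
    exact (hE (u n) (hu2 n)).trans (le_add_self.trans (hbdd n))
  obtain ⟨v, -, φ, hφ, hlim⟩ := ((totallyBounded_setOf_gagliardoEnergy_le hα.1 R √C.toReal
    (ENNReal.div_lt_top hC.ne hc).ne).closure.isCompact_of_isClosed isClosed_closure).tendsto_subseq
    fun n => subset_closure ⟨hnorm n, hsupp n, henergy n⟩
  refine ⟨φ, hφ, v, Lp.memLp v, ?_⟩
  have hdist : ∀ n, eLpNorm (fun x => u (φ n) x - v x) 2 volume = edist (U (φ n)) v := fun n => by
    rw [Lp.edist_def]
    exact eLpNorm_congr_ae ((hu2 (φ n)).coeFn_toLp.symm.sub EventuallyEq.rfl)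
  simpa only [hdist, edist_self, Function.comp_apply] using hlim.edist (tendsto_const_nhds (x := v))

/-- Compactness of the embedding `H_Ω(ℝ^d;k) ↪ L²(Ω)` under condition (E_α): every
sequence that is bounded in `H_Ω(ℝ^d;k)` has a subsequence converging in `L²`. -/
theorem stmt_14 (Ω : Set (EuclideanSpace ℝ (Fin d))) (hΩo : IsOpen Ω)
    (hΩb : Bornology.IsBounded Ω)
    (k : EuclideanSpace ℝ (Fin d) → EuclideanSpace ℝ (Fin d) → ℝ)
    (hk : Measurable (Function.uncurry k)) (hknn : ∀ x y, 0 ≤ k x y)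
    (α lam : ℝ) (hα : α ∈ Set.Ioo (0 : ℝ) 2) (hlam : 0 < lam)
    (hE : ∀ u : EuclideanSpace ℝ (Fin d) → ℝ, MemLp u 2 →
      ENNReal.ofReal (lam * α * (2 - α)) *
          (∫⁻ x, ∫⁻ y, ENNReal.ofReal ((u x - u y) ^ 2 * ‖x - y‖ ^ (-(d : ℝ) - α))) ≤
        energy k u)
    (u : ℕ → EuclideanSpace ℝ (Fin d) → ℝ)
    (hmeas : ∀ n, Measurable (u n)) (hu2 : ∀ n, MemLp (u n) 2)
    (huΩ : ∀ n, ∀ᵐ x ∂(volume : Measure (EuclideanSpace ℝ (Fin d))), x ∉ Ω → u n x = 0)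
    (C : ℝ≥0∞) (hC : C < ⊤)
    (hbdd : ∀ n, (∫⁻ x, ENNReal.ofReal ((u n x) ^ 2)) + energy k (u n) ≤ C) :
    ∃ φ : ℕ → ℕ, StrictMono φ ∧ ∃ v : EuclideanSpace ℝ (Fin d) → ℝ, MemLp v 2 ∧
      Filter.Tendsto (fun n => eLpNorm (fun x => u (φ n) x - v x) 2 volume)
        Filter.atTop (nhds 0) :=
  stmt_14_general Ω hΩb k α lam hα hlam hE u hu2 huΩ C hC hbdd
end

section
/- Let b, α: ℝ^d → ℝ with c₁ ≤ b ≤ c₂ for constants 0 < c₁ ≤ c₂, α₁ ≤ α ≤ α₂ with 0 < α₁ ≤ α₂ < 2, α Hölder continuous with [α]_{C^{0,β}} ≤ C_H for some β ∈ (0,1). Fix R > 1 and define k'(x,y) = b(x)|x−y|^{−d−α(x)}·1_{B_R}(x−y), with symmetric part k'_s and antisymmetric part k'_a. Then there exists Θ < 1 (depending on c₁, c₂, C_H, β, α₁, α₂, R) such that |k'_a(x,y)| ≤ Θ·k'_s(x,y) for all x ≠ y with |x−y| < R. -/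
/-!
With `r = ‖x - y‖`, the ratio of `b x * r ^ (-d - α x)` to `b y * r ^ (-d - α y)` is
`b x / b y * r ^ (α y - α x)`, which is at most `M = c₂ / c₁ * exp (C_H / β + (α₂ - α₁) * log R)`
in both directions: for `r ≤ 1` because `|α y - α x| ≤ C_H * r ^ β` and `r ^ β * |log r| ≤ 1 / β`,
for `1 < r < R` because the exponent lies in `[α₁ - α₂, α₂ - α₁]`. Reals with `u ≤ M * v` and
`v ≤ M * u` satisfy
`|u - v| ≤ (M - 1) / (M + 1) * (u + v)`, so `Θ = (M - 1) / (M + 1)` works.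
-/

open Real Set

lemma abs_sub_le_div_mul_add {u v M : ℝ} (hM : 0 < M + 1) (huv : u ≤ M * v)
    (hvu : v ≤ M * u) : |u - v| ≤ (M - 1) / (M + 1) * (u + v) := by
  rw [div_mul_eq_mul_div, abs_sub_le_iff, le_div_iff₀ hM, le_div_iff₀ hM]
  constructor <;> linarith

lemma neg_log_mul_rpow_le {r β : ℝ} (hr : 0 < r) (hβ : 0 < β) : -log r * r ^ β ≤ 1 / β := by
  have h := log_le_rpow_div (inv_nonneg.mpr hr.le) hβ
  rw [log_inv, inv_rpow hr.le] at h
  have hrβ : 0 < r ^ β := rpow_pos_of_pos hr β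
  calc -log r * r ^ β ≤ (r ^ β)⁻¹ / β * r ^ β := mul_le_mul_of_nonneg_right h hrβ.le
    _ = 1 / β := by field_simp

lemma mul_log_le_of_abs_le_mul_rpow {r β C Δ : ℝ} (hr : 0 < r) (hr1 : r ≤ 1) (hβ : 0 < β)
    (hC : 0 ≤ C) (hΔ : |Δ| ≤ C * r ^ β) : Δ * log r ≤ C / β := by
  have hlog : 0 ≤ -log r := neg_nonneg.mpr (log_nonpos hr.le hr1)
  calc Δ * log r ≤ |Δ| * -log r := by nlinarith [neg_abs_le Δ]
    _ ≤ C * r ^ β * -log r := mul_le_mul_of_nonneg_right hΔ hlog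
    _ = C * (-log r * r ^ β) := by ring
    _ ≤ C * (1 / β) := mul_le_mul_of_nonneg_left (neg_log_mul_rpow_le hr hβ) hC
    _ = C / β := by ring

lemma sub_mul_log_le {r R β C a₁ a₂ s t : ℝ} (hr : 0 < r) (hrR : r ≤ R) (hR : 1 ≤ R)
    (hβ : 0 < β) (hC : 0 ≤ C) (hs : s ∈ Icc a₁ a₂) (ht : t ∈ Icc a₁ a₂)
    (hst : |t - s| ≤ C * r ^ β) : (t - s) * log r ≤ C / β + (a₂ - a₁) * log R := by
  have hlogR : 0 ≤ log R := log_nonneg hR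
  rcases le_or_gt r 1 with hr1 | hr1
  · have := mul_log_le_of_abs_le_mul_rpow hr hr1 hβ hC hst
    have : 0 ≤ (a₂ - a₁) * log R := mul_nonneg (by linarith [hs.1, hs.2]) hlogR
    linarith
  · have hlog : 0 ≤ log r := log_nonneg hr1.le
    have hlogr : log r ≤ log R := log_le_log hr hrR
    have hCβ : 0 ≤ C / β := div_nonneg hC hβ.le
    nlinarith [hs.1, hs.2, ht.1, ht.2]

lemma rpow_sub_le_exp_mul_rpow_sub {r s t p L : ℝ} (hr : 0 < r) (h : (t - s) * log r ≤ L) :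
    r ^ (p - s) ≤ exp L * r ^ (p - t) := by
  have hpow : r ^ (t - s) ≤ exp L := by
    rw [rpow_def_of_pos hr, mul_comm]
    exact exp_le_exp.mpr h
  calc r ^ (p - s) = r ^ (t - s) * r ^ (p - t) := by rw [← rpow_add hr]; ring_nf
    _ ≤ exp L * r ^ (p - t) := mul_le_mul_of_nonneg_right hpow (rpow_nonneg hr.le _)

lemma mul_rpow_sub_le {r R β C a₁ a₂ c₁ c₂ p s t b b' : ℝ} (hr : 0 < r) (hrR : r ≤ R)
    (hR : 1 ≤ R) (hβ : 0 < β) (hC : 0 ≤ C) (hs : s ∈ Icc a₁ a₂) (ht : t ∈ Icc a₁ a₂)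
    (hst : |t - s| ≤ C * r ^ β) (hc₁ : 0 < c₁) (hb₀ : 0 ≤ b) (hb : b ≤ c₂) (hb' : c₁ ≤ b') :
    b * r ^ (p - s) ≤ c₂ / c₁ * exp (C / β + (a₂ - a₁) * log R) * (b' * r ^ (p - t)) := by
  set L := C / β + (a₂ - a₁) * log R
  have hpow := rpow_sub_le_exp_mul_rpow_sub (p := p) hr (sub_mul_log_le hr hrR hR hβ hC hs ht hst)
  have hQ : 0 ≤ exp L * r ^ (p - t) := by positivity
  calc b * r ^ (p - s) ≤ c₂ * (exp L * r ^ (p - t)) :=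
        mul_le_mul hb hpow (rpow_nonneg hr.le _) (hb₀.trans hb)
    _ = c₂ / c₁ * (exp L * r ^ (p - t)) * c₁ := by field_simp
    _ ≤ c₂ / c₁ * (exp L * r ^ (p - t)) * b' :=
        mul_le_mul_of_nonneg_left hb' (mul_nonneg (div_nonneg (hb₀.trans hb) hc₁.le) hQ)
    _ = c₂ / c₁ * exp L * (b' * r ^ (p - t)) := by ring

theorem stmt_16_general {d : ℕ}
    (b α : EuclideanSpace ℝ (Fin d) → ℝ)
    (c₁ c₂ : ℝ) (hc₁ : 0 < c₁) (hc₁₂ : c₁ ≤ c₂)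
    (hb : ∀ x, c₁ ≤ b x ∧ b x ≤ c₂)
    (α₁ α₂ : ℝ)
    (hα : ∀ x, α₁ ≤ α x ∧ α x ≤ α₂)
    (β C_H : ℝ) (hβ : β ∈ Set.Ioo (0 : ℝ) 1) (hCH : 0 < C_H)
    (hHold : ∀ x y, |α x - α y| ≤ C_H * ‖x - y‖ ^ β)
    (R : ℝ) (hR : 1 < R) :
    ∃ Θ < (1 : ℝ), ∀ x y : EuclideanSpace ℝ (Fin d), x ≠ y → ‖x - y‖ < R →
      |(b x * ‖x - y‖ ^ (-(d : ℝ) - α x) - b y * ‖x - y‖ ^ (-(d : ℝ) - α y)) / 2| ≤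
        Θ * ((b x * ‖x - y‖ ^ (-(d : ℝ) - α x) + b y * ‖x - y‖ ^ (-(d : ℝ) - α y)) / 2) := by
  set M := c₂ / c₁ * exp (C_H / β + (α₂ - α₁) * log R)
  have hM : 0 < M + 1 := by have : 0 < c₂ / c₁ := div_pos (hc₁.trans_le hc₁₂) hc₁; positivity
  refine ⟨(M - 1) / (M + 1), (div_lt_one hM).mpr (by linarith), fun x y hxy hxyR => ?_⟩
  have hr : 0 < ‖x - y‖ := norm_pos_iff.mpr (sub_ne_zero.mpr hxy)
  have bound : ∀ z w, |α w - α z| ≤ C_H * ‖x - y‖ ^ β →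
      b z * ‖x - y‖ ^ (-(d : ℝ) - α z) ≤ M * (b w * ‖x - y‖ ^ (-(d : ℝ) - α w)) := fun z w h =>
    mul_rpow_sub_le hr hxyR.le hR.le hβ.1 hCH.le (hα z) (hα w) h hc₁
      (hc₁.le.trans (hb z).1) (hb z).2 (hb w).1
  rw [abs_div, abs_two, ← mul_div_assoc, div_le_div_iff_of_pos_right two_pos]
  exact abs_sub_le_div_mul_add hM (bound x y (by rw [abs_sub_comm]; exact hHold x y))
    (bound y x (hHold x y))

/-- Example `schilling`: for `k'(x,y) = b(x)|x−y|^{−d−α(x)}·1_{B_R}(x−y)` with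
`0 < c₁ ≤ b ≤ c₂`, `0 < α₁ ≤ α ≤ α₂ < 2` and `α` Hölder continuous, there is `Θ < 1`
with `|k'_a(x,y)| ≤ Θ·k'_s(x,y)` for all `x ≠ y` with `|x−y| < R`. -/
theorem stmt_16 {d : ℕ} (hd : 0 < d)
    (b α : EuclideanSpace ℝ (Fin d) → ℝ)
    (c₁ c₂ : ℝ) (hc₁ : 0 < c₁) (hc₁₂ : c₁ ≤ c₂)
    (hb : ∀ x, c₁ ≤ b x ∧ b x ≤ c₂)
    (α₁ α₂ : ℝ) (hα₁ : 0 < α₁) (hα₂ : α₂ < 2) (hα₁₂ : α₁ ≤ α₂)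
    (hα : ∀ x, α₁ ≤ α x ∧ α x ≤ α₂)
    (β C_H : ℝ) (hβ : β ∈ Set.Ioo (0 : ℝ) 1) (hCH : 0 < C_H)
    (hHold : ∀ x y, |α x - α y| ≤ C_H * ‖x - y‖ ^ β)
    (R : ℝ) (hR : 1 < R) :
    ∃ Θ < (1 : ℝ), ∀ x y : EuclideanSpace ℝ (Fin d), x ≠ y → ‖x - y‖ < R →
      |(b x * ‖x - y‖ ^ (-(d : ℝ) - α x) - b y * ‖x - y‖ ^ (-(d : ℝ) - α y)) / 2| ≤
        Θ * ((b x * ‖x - y‖ ^ (-(d : ℝ) - α x) + b y * ‖x - y‖ ^ (-(d : ℝ) - α y)) / 2) :=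
  stmt_16_general b α c₁ c₂ hc₁ hc₁₂ hb α₁ α₂ hα β C_H hβ hCH hHold R hR
end
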